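/- Let Tⁿ = (ℝ/ℤ)ⁿ be the standard n-dimensional torus. For each i with 1 ≤ i ≤ n, let γᵢ be the loop in the space G(Tⁿ) of self-homotopy equivalences of Tⁿ, based at the identity map, defined by γᵢ(t) = (translation by t·eᵢ), i.e. γᵢ(t)(x) = x + t·eᵢ for t ∈ [0,1] and x ∈ Tⁿ, where eᵢ ∈ ℤⁿ is the i-th standard basis vector (so each γᵢ(t) is a rotation of the i-th circle factor, and γᵢ(0) = γᵢ(1) = id). Then γᵢ is a well-defined continuous loop in G(Tⁿ), and the group homomorphism ℤⁿ → π₁(G(Tⁿ), id) sending eᵢ to the homotopy class [γᵢ] is an isomorphism; in particular π₁(G(Tⁿ), id) ≅ ℤⁿ is freely generated by the classes of these rotation loops. -/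

import Mathlib

open ContinuousMap

attribute [local instance] Path.Homotopic.setoid

/-- The space of self-homotopy equivalences of `X`, as a subspace of the mapping
space `C(X, X)` with the compact-open topology. -/
def HEquivSpace (X : Type*) [TopologicalSpace X] : Set C(X, X) :=
  {f | ∃ g : C(X, X), (f.comp g).Homotopic (ContinuousMap.id X) ∧
    (g.comp f).Homotopic (ContinuousMap.id X)}

/-- The identity map, as a point of the space of self-homotopy equivalences. -/
def HEquivSpace.idPt (X : Type*) [TopologicalSpace X] : HEquivSpace X :=
  ⟨ContinuousMap.id X, ContinuousMap.id X,
    by rw [ContinuousMap.id_comp], by rw [ContinuousMap.id_comp]⟩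

/-- The standard `n`-dimensional torus `Tⁿ = (ℝ/ℤ)ⁿ`. -/
abbrev Torus (n : ℕ) : Type := Fin n → AddCircle (1 : ℝ)

noncomputable section
namespace TorusPi1
open Set

local instance : Fact ((0:ℝ) < 1) := ⟨one_pos⟩

abbrev A := AddCircle (1 : ℝ)

/-- the representative in `[-1/2, 1/2)` -/
def dd (a : A) : ℝ := ((AddCircle.equivIco 1 (-2⁻¹)) a : ℝ)

lemma dd_coe (a : A) : ((dd a : ℝ) : A) = a := (AddCircle.equivIco 1 (-2⁻¹)).symm_apply_apply a

lemma coe_int_eq_zero (k : ℤ) : ((k : ℝ) : A) = 0 := by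
  rw [AddCircle.coe_eq_zero_iff]; exact ⟨k, by simp⟩

lemma dd_zero : dd 0 = 0 := by
  have h1 : ((dd (0:A) : ℝ) : A) = 0 := dd_coe 0
  have h2 : dd (0:A) ∈ Ico (-2⁻¹ : ℝ) (-2⁻¹ + 1) := ((AddCircle.equivIco 1 (-2⁻¹)) (0:A)).2
  rw [AddCircle.coe_eq_zero_iff] at h1
  obtain ⟨k, hk⟩ := h1
  have hk' : (k:ℝ) = dd 0 := by simpa using hk
  rw [← hk']
  rw [← hk'] at h2
  norm_num at h2 ⊢
  have : k = 0 := by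
    rcases h2 with ⟨h3, h4⟩
    have : (-1:ℝ) < k := by linarith
    have h5 : (-1:ℤ) < k := by exact_mod_cast this
    have h6 : (k:ℝ) < 1 := by linarith
    have h7 : k < 1 := by exact_mod_cast h6
    omega
  simp [this]

lemma dd_continuousAt {a : A} (h : ‖a‖ < 2⁻¹) : ContinuousAt dd a := by
  have hne : a ≠ ((-2⁻¹ : ℝ) : A) := by
    rintro rfl
    rw [AddCircle.norm_eq] at h
    norm_num [round_eq] at h
  exact continuousAt_subtype_val.comp (AddCircle.continuousAt_equivIco 1 (-2⁻¹) hne)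

end TorusPi1

namespace TorusPi1
open Set
open Finset Set

lemma qmk_eq (x : ℝ) : (QuotientAddGroup.mk' (AddSubgroup.zmultiples (1:ℝ)) x : A) = (x : A) := rfl

lemma min_sub_min_le {a b b' : ℝ} (hbb' : b ≤ b') : |min a b' - min a b| ≤ b' - b := by
  have h1 : min a b ≤ min a b' := min_le_min le_rfl hbb'
  have h2 : min a b' ≤ min a b + (b' - b) := by
    rcases le_total a b with h | h
    · rw [min_eq_left h, min_eq_left (h.trans hbb')]; linarith
    · rw [min_eq_right h]; exact (min_le_right _ _).trans (by linarith)
  rw [abs_sub_le_iff]; constructor <;> linarith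

theorem lift_exists {Z : Type*} [MetricSpace Z] [CompactSpace Z]
    (K : C(unitInterval × Z, A)) (hK : ∀ z, K (0, z) = 0) :
    ∃ L : C(unitInterval × Z, ℝ), (∀ z, L (0, z) = 0) ∧ ∀ q, ((L q : ℝ) : A) = K q := by
  have hu : UniformContinuous K := CompactSpace.uniformContinuous_of_continuous K.continuous
  rw [Metric.uniformContinuous_iff] at hu
  obtain ⟨δ, hδ, hd⟩ := hu 2⁻¹ (by norm_num)
  obtain ⟨N0, hN0⟩ := exists_nat_one_div_lt hδ
  set N : ℕ := N0 + 1 with hN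
  have hNpos : (0:ℝ) < N := by positivity
  have hmem : ∀ (t : unitInterval) (k : ℕ), min (t:ℝ) (k / N) ∈ unitInterval := fun t k =>
    ⟨le_min t.2.1 (by positivity), min_le_of_left_le t.2.2⟩
  set τ : ℕ → unitInterval → unitInterval := fun k t => ⟨min (t:ℝ) (k / N), hmem t k⟩ with hτ
  have hτc : ∀ k, Continuous fun t : unitInterval => τ k t :=
    fun k => Continuous.subtype_mk (continuous_subtype_val.min continuous_const) _
  have hτat0 : ∀ k, τ k 0 = 0 := by
    intro k
    apply Subtype.ext
    simp only [hτ]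
    exact min_eq_left (by positivity)
  have hτ0 : ∀ t, τ 0 t = 0 := by
    intro t
    apply Subtype.ext
    simp only [hτ, Nat.cast_zero, zero_div]
    exact min_eq_right t.2.1
  have hτN : ∀ t, τ N t = t := by
    intro t
    apply Subtype.ext
    simp only [hτ]
    rw [div_self (ne_of_gt hNpos)]
    exact min_eq_left t.2.2
  have hdist : ∀ (t : unitInterval) (z : Z) (k : ℕ),
      ‖K (τ (k+1) t, z) - K (τ k t, z)‖ < 2⁻¹ := by
    intro t z k
    have hb : (k:ℝ)/N ≤ ((k:ℝ)+1)/N := by gcongr; linarith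
    have h1 : dist (τ (k+1) t) (τ k t) ≤ 1/N := by
      rw [Subtype.dist_eq, Real.dist_eq]
      show |min (t:ℝ) (((k+1:ℕ):ℝ)/N) - min (t:ℝ) ((k:ℝ)/N)| ≤ 1/N
      rw [Nat.cast_add, Nat.cast_one]
      calc |min (t:ℝ) (((k:ℝ)+1)/N) - min (t:ℝ) ((k:ℝ)/N)| ≤ ((k:ℝ)+1)/N - (k:ℝ)/N :=
            min_sub_min_le hb
        _ = 1/N := by ring
    have h2 : dist ((τ (k+1) t, z) : unitInterval × Z) (τ k t, z) < δ := by
      rw [Prod.dist_eq]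
      simp only [dist_self]
      have hlt : (1:ℝ)/N < δ := by rw [hN]; push_cast; exact_mod_cast hN0
      exact max_lt (lt_of_le_of_lt h1 hlt) hδ
    have := hd h2
    rwa [dist_eq_norm] at this
  set g : ℕ → unitInterval × Z → A := fun k q => K (τ k q.1, q.2) with hg
  have hgc : ∀ k, Continuous (g k) := fun k =>
    K.continuous.comp (((hτc k).comp continuous_fst).prodMk continuous_snd)
  set L0 : unitInterval × Z → ℝ := fun q => ∑ k ∈ Finset.range N, dd (g (k+1) q - g k q)
    with hL0
  have hLc : Continuous L0 := by
    apply continuous_finset_sum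
    intro k _
    rw [continuous_iff_continuousAt]
    intro q
    have h3 : ContinuousAt (fun q => g (k+1) q - g k q) q := ((hgc (k+1)).sub (hgc k)).continuousAt
    exact ContinuousAt.comp (g := dd) (f := fun q => g (k+1) q - g k q) (x := q)
      (dd_continuousAt (hdist q.1 q.2 k)) h3
  refine ⟨⟨L0, hLc⟩, ?_, ?_⟩
  · intro z
    show ∑ k ∈ Finset.range N, dd (g (k+1) (0, z) - g k (0, z)) = 0
    have hgz : ∀ k, g k ((0 : unitInterval), z) = K (0, z) := fun k => by
      simp only [hg, hτat0 k]
    apply Finset.sum_eq_zero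
    intro k _
    rw [hgz, hgz, sub_self, dd_zero]
  · intro q
    show ((∑ k ∈ Finset.range N, dd (g (k+1) q - g k q) : ℝ) : A) = K q
    rw [← qmk_eq, map_sum]
    have : ∀ k ∈ Finset.range N,
        (QuotientAddGroup.mk' (AddSubgroup.zmultiples (1:ℝ)) (dd (g (k+1) q - g k q)) : A)
          = g (k+1) q - g k q := fun k _ => by rw [qmk_eq, dd_coe]
    rw [Finset.sum_congr rfl this, Finset.sum_range_sub (fun k => g k q)]
    have h1 : g N q = K q := by simp only [hg, hτN]
    have h2 : g 0 q = 0 := by simp only [hg, hτ0]; exact hK q.2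
    rw [h1, h2, sub_zero]

lemma sub_coe_int {x y : ℝ} (h : ((x : A)) = (y : A)) : ∃ k : ℤ, x - y = k := by
  have : ((x - y : ℝ) : A) = 0 := by
    rw [← qmk_eq, map_sub, qmk_eq, qmk_eq, h, sub_self]
  rw [AddCircle.coe_eq_zero_iff] at this
  obtain ⟨k, hk⟩ := this
  exact ⟨k, by simpa using hk.symm⟩

lemma int_ne_half (k : ℤ) (h : (k:ℝ) = 2⁻¹ ∨ (k:ℝ) = -2⁻¹) : False := by
  rcases h with h | h
  · have : (2*k : ℤ) = 1 := by exact_mod_cast (by push_cast; linarith : ((2*k : ℤ):ℝ) = ((1:ℤ):ℝ))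
    omega
  · have : (2*k : ℤ) = -1 := by exact_mod_cast (by push_cast; linarith : ((2*k : ℤ):ℝ) = ((-1:ℤ):ℝ))
    omega

theorem lift_unique {W : Type*} [TopologicalSpace W] [PreconnectedSpace W]
    {g h : W → ℝ} (hg : Continuous g) (hh : Continuous h)
    (hproj : ∀ w, ((g w : ℝ) : A) = ((h w : ℝ) : A)) {w₀ : W} (h₀ : g w₀ = h w₀) :
    ∀ w, g w = h w := by
  intro w
  by_contra hne
  obtain ⟨k, hk⟩ := sub_coe_int (hproj w)
  have hk0 : k ≠ 0 := by
    rintro rfl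
    exact hne (sub_eq_zero.mp (by simpa using hk))
  set D : W → ℝ := fun w => g w - h w with hD
  have hDc : Continuous D := hg.sub hh
  have hD₀ : D w₀ = 0 := sub_eq_zero.mpr h₀
  have hDw : D w = k := hk
  have key : ∃ w', D w' = 2⁻¹ ∨ D w' = -2⁻¹ := by
    rcases lt_or_ge 0 k with hpos | hneg
    · have h1 : (1:ℝ) ≤ k := by exact_mod_cast hpos
      have hiv := (isPreconnected_univ (α := W)).intermediate_value
        (Set.mem_univ w₀) (Set.mem_univ w) hDc.continuousOn
      have : (2⁻¹:ℝ) ∈ Set.Icc (D w₀) (D w) := by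
        rw [hD₀, hDw]; constructor <;> [norm_num; linarith]
      obtain ⟨w', _, hw'⟩ := hiv this
      exact ⟨w', Or.inl hw'⟩
    · have hneg' : k < 0 := lt_of_le_of_ne hneg hk0
      have h1 : (k:ℝ) ≤ -1 := by
        have : k ≤ -1 := by omega
        exact_mod_cast this
      have hiv := (isPreconnected_univ (α := W)).intermediate_value
        (Set.mem_univ w) (Set.mem_univ w₀) hDc.continuousOn
      have : (-2⁻¹:ℝ) ∈ Set.Icc (D w) (D w₀) := by
        rw [hD₀, hDw]; constructor <;> [linarith; norm_num]
      obtain ⟨w', _, hw'⟩ := hiv this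
      exact ⟨w', Or.inr hw'⟩
  obtain ⟨w', hw'⟩ := key
  obtain ⟨k', hk'⟩ := sub_coe_int (hproj w')
  apply int_ne_half k'
  rcases hw' with h | h
  · exact Or.inl (by rw [← hk']; exact h ▸ rfl)
  · exact Or.inr (by rw [← hk']; exact h ▸ rfl)

theorem lift_const {W : Type*} [TopologicalSpace W] [PreconnectedSpace W] [Nonempty W]
    {g : W → ℝ} (hg : Continuous g) (hproj : ∀ w, ((g w : ℝ) : A) = 0) :
    ∃ m : ℤ, ∀ w, g w = m := by
  obtain ⟨w₀⟩ := (inferInstance : Nonempty W)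
  obtain ⟨m, hm⟩ := sub_coe_int (x := g w₀) (y := 0) (by rw [hproj w₀]; norm_num)
  refine ⟨m, lift_unique hg continuous_const
    (fun w => by rw [hproj w, coe_int_eq_zero]) (w₀ := w₀) (by simpa using hm)⟩


variable {n : ℕ}

lemma contA : Continuous (fun x : ℝ => (x : A)) := AddCircle.continuous_mk' 1

/-- The self-map `x ↦ x + (coe ∘ c x)` of the torus, for `c : C(Tⁿ, ℝⁿ)`. -/
def addLift (c : C(Torus n, Fin n → ℝ)) : C(Torus n, Torus n) :=
  ⟨fun x => x + fun i => ((c x i : ℝ) : A),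
   continuous_id.add (continuous_pi fun i =>
     contA.comp ((continuous_apply i).comp c.continuous))⟩

lemma addLift_apply (c : C(Torus n, Fin n → ℝ)) (x : Torus n) :
    addLift c x = x + fun i => ((c x i : ℝ) : A) := rfl

lemma coe_zero_A : (((0:ℝ)) : A) = 0 := rfl

lemma addLift_homotopic_id (c : C(Torus n, Fin n → ℝ)) :
    (addLift c).Homotopic (ContinuousMap.id (Torus n)) := by
  refine Nonempty.intro ?_
  refine ContinuousMap.Homotopy.symm ?_
  exact
  { toFun := fun p => p.2 + fun i => ((((p.1 : ℝ)) * c p.2 i : ℝ) : A)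
    continuous_toFun := by
      refine continuous_snd.add (continuous_pi fun i => contA.comp ?_)
      exact (continuous_subtype_val.comp continuous_fst).mul
        ((continuous_apply i).comp (c.continuous.comp continuous_snd))
    map_zero_left := fun x => by
      show x + _ = x
      have : (fun i => ((((0:unitInterval) : ℝ) * c x i : ℝ) : A)) = (0 : Torus n) := by
        funext i
        simp only [Set.Icc.coe_zero, zero_mul]
        rfl
      rw [this, add_zero]
    map_one_left := fun x => by
      show x + _ = addLift c x
      rw [addLift_apply]
      congr 1
      funext i
      norm_num }

lemma addLift_mem (c : C(Torus n, Fin n → ℝ)) : addLift c ∈ HEquivSpace (Torus n) :=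
  ⟨ContinuousMap.id _,
    by rw [ContinuousMap.comp_id]; exact addLift_homotopic_id c,
    by rw [ContinuousMap.id_comp]; exact addLift_homotopic_id c⟩


/-- the rotating family `(t, x) ↦ x + t·m` -/
def rhoMap (m : Fin n → ℤ) : C(unitInterval × Torus n, Torus n) :=
  ⟨fun q => q.2 + fun i => ((((q.1 : ℝ)) * (m i : ℝ) : ℝ) : A),
   continuous_snd.add (continuous_pi fun i => contA.comp
     ((continuous_subtype_val.comp continuous_fst).mul continuous_const))⟩

lemma rhoMap_mem (m : Fin n → ℤ) (t : unitInterval) :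
    (rhoMap m).curry t ∈ HEquivSpace (Torus n) := by
  have h : (rhoMap m).curry t
      = addLift (ContinuousMap.const (Torus n) fun i => (t : ℝ) * (m i : ℝ)) := by
    ext x
    rfl
  rw [h]
  exact addLift_mem _

/-- The rotation loop in the space of self-homotopy equivalences, with winding vector `m`. -/
def lam (m : Fin n → ℤ) :
    Path (HEquivSpace.idPt (Torus n)) (HEquivSpace.idPt (Torus n)) where
  toFun t := ⟨(rhoMap m).curry t, rhoMap_mem m t⟩
  continuous_toFun := ((rhoMap m).curry.continuous).subtype_mk _
  source' := by
    apply Subtype.ext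
    refine ContinuousMap.ext fun x => ?_
    show x + (fun i => ((((0:unitInterval) : ℝ) * (m i : ℝ) : ℝ) : A)) = x
    have : (fun i => ((((0:unitInterval) : ℝ) * (m i : ℝ) : ℝ) : A)) = (0 : Torus n) := by
      funext i
      simp only [Set.Icc.coe_zero, zero_mul]
      rfl
    rw [this, add_zero]
  target' := by
    apply Subtype.ext
    refine ContinuousMap.ext fun x => ?_
    show x + (fun i => ((((1:unitInterval) : ℝ) * (m i : ℝ) : ℝ) : A)) = x
    have : (fun i => ((((1:unitInterval) : ℝ) * (m i : ℝ) : ℝ) : A)) = (0 : Torus n) := by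
      funext i
      simp only [Set.Icc.coe_one, one_mul]
      exact coe_int_eq_zero (m i)
    rw [this, add_zero]

lemma lam_apply (m : Fin n → ℤ) (t : unitInterval) (x : Torus n) :
    ((lam m t : HEquivSpace (Torus n)) : C(Torus n, Torus n)) x
      = x + fun i => ((((t : ℝ)) * (m i : ℝ) : ℝ) : A) := rfl

/-- The "difference from identity" map of a loop of self-homotopy equivalences. -/
def Kmap (γ : Path (HEquivSpace.idPt (Torus n)) (HEquivSpace.idPt (Torus n))) :
    C(unitInterval × Torus n, Torus n) :=
  ⟨fun q => ((γ q.1 : HEquivSpace (Torus n)) : C(Torus n, Torus n)) q.2 - q.2, by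
    have h1 : Continuous fun q : unitInterval × Torus n =>
        ((γ q.1 : HEquivSpace (Torus n)) : C(Torus n, Torus n)) :=
      continuous_subtype_val.comp (γ.continuous.comp continuous_fst)
    exact (continuous_eval.comp (h1.prodMk continuous_snd)).sub continuous_snd⟩

lemma Kmap_apply (γ : Path (HEquivSpace.idPt (Torus n)) (HEquivSpace.idPt (Torus n)))
    (q : unitInterval × Torus n) :
    Kmap γ q = ((γ q.1 : HEquivSpace (Torus n)) : C(Torus n, Torus n)) q.2 - q.2 := rfl

lemma Kmap_zero (γ : Path (HEquivSpace.idPt (Torus n)) (HEquivSpace.idPt (Torus n)))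
    (x : Torus n) : Kmap γ (0, x) = 0 := by
  rw [Kmap_apply]
  show ((γ 0 : HEquivSpace (Torus n)) : C(Torus n, Torus n)) x - x = 0
  rw [γ.source]
  show (ContinuousMap.id (Torus n)) x - x = 0
  simp

lemma Kmap_one (γ : Path (HEquivSpace.idPt (Torus n)) (HEquivSpace.idPt (Torus n)))
    (x : Torus n) : Kmap γ (1, x) = 0 := by
  rw [Kmap_apply]
  show ((γ 1 : HEquivSpace (Torus n)) : C(Torus n, Torus n)) x - x = 0
  rw [γ.target]
  show (ContinuousMap.id (Torus n)) x - x = 0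
  simp

lemma exists_loopLift (γ : Path (HEquivSpace.idPt (Torus n)) (HEquivSpace.idPt (Torus n))) :
    ∃ L : C(unitInterval × Torus n, Fin n → ℝ), (∀ x, L (0, x) = 0) ∧
      (∀ q i, ((L q i : ℝ) : A) = Kmap γ q i) := by
  have h : ∀ i : Fin n, ∃ Li : C(unitInterval × Torus n, ℝ),
      (∀ x, Li (0, x) = 0) ∧ ∀ q, ((Li q : ℝ) : A) = Kmap γ q i := by
    intro i
    apply lift_exists ⟨fun q => Kmap γ q i, (continuous_apply i).comp (Kmap γ).continuous⟩
    intro z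
    show Kmap γ (0, z) i = 0
    rw [Kmap_zero]
    rfl
  choose Li h0 hproj using h
  exact ⟨⟨fun q i => Li i q, continuous_pi fun i => (Li i).continuous⟩,
    fun x => funext fun i => h0 i x, fun q i => hproj i q⟩

lemma exists_end (γ : Path (HEquivSpace.idPt (Torus n)) (HEquivSpace.idPt (Torus n)))
    (L : C(unitInterval × Torus n, Fin n → ℝ))
    (hproj : ∀ q i, ((L q i : ℝ) : A) = Kmap γ q i) :
    ∃ m : Fin n → ℤ, ∀ x i, L (1, x) i = m i := by
  have h : ∀ i : Fin n, ∃ mi : ℤ, ∀ x : Torus n, L (1, x) i = mi := by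
    intro i
    apply lift_const (g := fun x : Torus n => L (1, x) i)
    · exact (continuous_apply i).comp (L.continuous.comp (Continuous.prodMk_right 1))
    · intro x
      rw [hproj (1, x) i, Kmap_one]
      rfl
  choose mi hm using h
  exact ⟨mi, fun x i => hm i x⟩


theorem homotopic_lam (γ : Path (HEquivSpace.idPt (Torus n)) (HEquivSpace.idPt (Torus n)))
    (L : C(unitInterval × Torus n, Fin n → ℝ))
    (h0 : ∀ x, L (0, x) = 0)
    (hproj : ∀ q i, ((L q i : ℝ) : A) = Kmap γ q i)
    (m : Fin n → ℤ) (hend : ∀ x i, L (1, x) i = m i) :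
    Path.Homotopic γ (lam m) := by
  set c : C((unitInterval × unitInterval) × Torus n, Fin n → ℝ) :=
    ⟨fun q => fun i =>
        (1 - (q.1.1 : ℝ)) * L (q.1.2, q.2) i + (q.1.1 : ℝ) * (q.1.2 : ℝ) * (m i : ℝ),
     by
       refine continuous_pi fun i => ?_
       have hs : Continuous fun q : (unitInterval × unitInterval) × Torus n => ((q.1.1 : ℝ)) :=
         continuous_subtype_val.comp (continuous_fst.comp continuous_fst)
       have ht : Continuous fun q : (unitInterval × unitInterval) × Torus n => ((q.1.2 : ℝ)) :=
         continuous_subtype_val.comp (continuous_snd.comp continuous_fst)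
       have hL : Continuous fun q : (unitInterval × unitInterval) × Torus n =>
           L (q.1.2, q.2) i :=
         (continuous_apply i).comp
           (L.continuous.comp ((continuous_snd.comp continuous_fst).prodMk continuous_snd))
       exact ((continuous_const.sub hs).mul hL).add ((hs.mul ht).mul continuous_const)⟩
    with hc
  set big : C((unitInterval × unitInterval) × Torus n, Torus n) :=
    ⟨fun q => q.2 + fun i => ((c q i : ℝ) : A),
      continuous_snd.add (continuous_pi fun i =>
        contA.comp ((continuous_apply i).comp c.continuous))⟩ with hbig
  have hmem : ∀ st : unitInterval × unitInterval, big.curry st ∈ HEquivSpace (Torus n) := by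
    intro st
    have h : big.curry st = addLift (c.curry st) := ContinuousMap.ext fun x => rfl
    rw [h]; exact addLift_mem _
  refine Nonempty.intro ?_
  refine
    { toFun := fun p => (⟨big.curry p, hmem p⟩ : HEquivSpace (Torus n))
      continuous_toFun := (big.curry.continuous).subtype_mk _
      map_zero_left := ?_
      map_one_left := ?_
      prop' := ?_ }
  · -- F (0, t) = γ t
    intro t
    apply Subtype.ext
    refine ContinuousMap.ext fun x => ?_
    show x + (fun i => ((c ((0, t), x) i : ℝ) : A))
      = ((γ t : HEquivSpace (Torus n)) : C(Torus n, Torus n)) x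
    funext i
    show x i + ((c ((0, t), x) i : ℝ) : A)
      = ((γ t : HEquivSpace (Torus n)) : C(Torus n, Torus n)) x i
    have hcv : c ((0, t), x) i = L (t, x) i := by
      show (1 - ((0 : unitInterval) : ℝ)) * L (t, x) i
          + ((0 : unitInterval) : ℝ) * (t : ℝ) * (m i : ℝ) = L (t, x) i
      norm_num
    rw [hcv, hproj (t, x) i, Kmap_apply]
    show x i + (((γ t : HEquivSpace (Torus n)) : C(Torus n, Torus n)) x i - x i) = _
    abel
  · -- F (1, t) = lam m t
    intro t
    apply Subtype.ext
    refine ContinuousMap.ext fun x => ?_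
    show x + (fun i => ((c ((1, t), x) i : ℝ) : A))
      = x + fun i => ((((t : ℝ)) * (m i : ℝ) : ℝ) : A)
    congr 1
    funext i
    congr 1
    show (1 - ((1 : unitInterval) : ℝ)) * L (t, x) i
        + ((1 : unitInterval) : ℝ) * (t : ℝ) * (m i : ℝ) = (t : ℝ) * (m i : ℝ)
    norm_num
  · -- rel {0, 1}
    intro s t ht
    apply Subtype.ext
    refine ContinuousMap.ext fun x => ?_
    rcases ht with h | h
    · subst h
      show x + (fun i => ((c ((s, 0), x) i : ℝ) : A))
        = ((γ 0 : HEquivSpace (Torus n)) : C(Torus n, Torus n)) x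
      rw [γ.source]
      have hcv : (fun i => ((c ((s, 0), x) i : ℝ) : A)) = (0 : Torus n) := by
        funext i
        have : c ((s, 0), x) i = 0 := by
          show (1 - (s : ℝ)) * L (0, x) i + (s : ℝ) * ((0 : unitInterval) : ℝ) * (m i : ℝ) = 0
          rw [h0 x]
          norm_num
        rw [this]
        rfl
      rw [hcv, add_zero]
      rfl
    · rw [Set.mem_singleton_iff] at h
      subst h
      show x + (fun i => ((c ((s, 1), x) i : ℝ) : A))
        = ((γ 1 : HEquivSpace (Torus n)) : C(Torus n, Torus n)) x
      rw [γ.target]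
      have hcv : (fun i => ((c ((s, 1), x) i : ℝ) : A)) = (0 : Torus n) := by
        funext i
        have h1 : c ((s, 1), x) i = (m i : ℝ) := by
          show (1 - (s : ℝ)) * L (1, x) i + (s : ℝ) * ((1 : unitInterval) : ℝ) * (m i : ℝ)
            = (m i : ℝ)
          rw [hend x i]
          push_cast
          ring
        rw [h1]
        exact coe_int_eq_zero (m i)
      rw [hcv, add_zero]
      rfl


theorem end_unique (γ γ' : Path (HEquivSpace.idPt (Torus n)) (HEquivSpace.idPt (Torus n)))
    (h : Path.Homotopic γ γ')
    (L L' : C(unitInterval × Torus n, Fin n → ℝ))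
    (h0 : ∀ x, L (0, x) = 0) (h0' : ∀ x, L' (0, x) = 0)
    (hproj : ∀ q i, ((L q i : ℝ) : A) = Kmap γ q i)
    (hproj' : ∀ q i, ((L' q i : ℝ) : A) = Kmap γ' q i)
    (m m' : Fin n → ℤ)
    (hend : ∀ x i, L (1, x) i = (m i : ℝ)) (hend' : ∀ x i, L' (1, x) i = (m' i : ℝ)) :
    m = m' := by
  obtain ⟨F⟩ := h
  have hFc : Continuous fun p : unitInterval × unitInterval => (F p : HEquivSpace (Torus n)) :=
    F.toHomotopy.toContinuousMap.continuous
  have hF0 : ∀ t, F (0, t) = γ t := fun t => F.toHomotopy.apply_zero t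
  have hF1 : ∀ t, F (1, t) = γ' t := fun t => F.toHomotopy.apply_one t
  have hFs0 : ∀ s, F (s, 0) = γ 0 := fun s => F.prop' s 0 (Set.mem_insert _ _)
  have hFs1 : ∀ s, F (s, 1) = γ 1 := fun s =>
    F.prop' s 1 (Set.mem_insert_of_mem _ rfl)
  funext i
  -- the homotopy, recentred: (t, (s, x)) ↦ (F (s, t) x - x) i
  set KF : C(unitInterval × (unitInterval × Torus n), A) :=
    ⟨fun q => (((F (q.2.1, q.1) : HEquivSpace (Torus n)) : C(Torus n, Torus n)) q.2.2
        - q.2.2) i, by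
      refine (continuous_apply i).comp (Continuous.sub ?_ (continuous_snd.comp continuous_snd))
      have h1 : Continuous fun q : unitInterval × (unitInterval × Torus n) =>
          ((F (q.2.1, q.1) : HEquivSpace (Torus n)) : C(Torus n, Torus n)) :=
        continuous_subtype_val.comp
          (hFc.comp ((continuous_fst.comp continuous_snd).prodMk continuous_fst))
      exact continuous_eval.comp
        (h1.prodMk (continuous_snd.comp continuous_snd))⟩
    with hKF
  have hKF0 : ∀ z : unitInterval × Torus n, KF (0, z) = 0 := by
    rintro ⟨s, x⟩
    show (((F (s, 0) : HEquivSpace (Torus n)) : C(Torus n, Torus n)) x - x) i = 0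
    rw [hFs0 s, γ.source]
    show ((ContinuousMap.id (Torus n)) x - x) i = 0
    simp
  obtain ⟨M, hM0, hMproj⟩ := lift_exists KF hKF0
  -- left edge agrees with L
  have hleft : ∀ q : unitInterval × Torus n, M (q.1, (0, q.2)) = L q i := by
    apply lift_unique (w₀ := ((0 : unitInterval), (0 : Torus n)))
    · exact M.continuous.comp (continuous_fst.prodMk
        ((continuous_const (y := (0 : unitInterval))).prodMk continuous_snd))
    · exact (continuous_apply i).comp L.continuous
    · intro q
      rw [hMproj (q.1, (0, q.2)), hproj q i, hKF]
      show (((F (0, q.1) : HEquivSpace (Torus n)) : C(Torus n, Torus n)) q.2 - q.2) i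
        = Kmap γ q i
      rw [hF0 q.1, Kmap_apply]
    · rw [hM0, h0]
      rfl
  have hright : ∀ q : unitInterval × Torus n, M (q.1, (1, q.2)) = L' q i := by
    apply lift_unique (w₀ := ((0 : unitInterval), (0 : Torus n)))
    · exact M.continuous.comp (continuous_fst.prodMk
        ((continuous_const (y := (1 : unitInterval))).prodMk continuous_snd))
    · exact (continuous_apply i).comp L'.continuous
    · intro q
      rw [hMproj (q.1, (1, q.2)), hproj' q i, hKF]
      show (((F (1, q.1) : HEquivSpace (Torus n)) : C(Torus n, Torus n)) q.2 - q.2) i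
        = Kmap γ' q i
      rw [hF1 q.1, Kmap_apply]
    · rw [hM0, h0']
      rfl
  -- top edge is a constant integer
  obtain ⟨k, hk⟩ := lift_const (g := fun z : unitInterval × Torus n => M (1, z))
    (M.continuous.comp (Continuous.prodMk_right 1))
    (by
      rintro ⟨s, x⟩
      rw [hMproj (1, (s, x)), hKF]
      show ((((F (s, 1) : HEquivSpace (Torus n)) : C(Torus n, Torus n)) x - x) i : A) = 0
      rw [hFs1 s, γ.target]
      show (((ContinuousMap.id (Torus n)) x - x) i : A) = 0
      simp)
  have e1 : (m i : ℝ) = k := by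
    rw [← hend 0 i, ← hleft (1, 0), hk ((0 : unitInterval), (0 : Torus n))]
  have e2 : (m' i : ℝ) = k := by
    rw [← hend' 0 i, ← hright (1, 0), hk ((1 : unitInterval), (0 : Torus n))]
  exact_mod_cast e1.trans e2.symm


/-- explicit lift of the rotation loop -/
def lamLift (m : Fin n → ℤ) : C(unitInterval × Torus n, Fin n → ℝ) :=
  ⟨fun q i => (q.1 : ℝ) * (m i : ℝ),
   continuous_pi fun i => (continuous_subtype_val.comp continuous_fst).mul continuous_const⟩

lemma lamLift_zero (m : Fin n → ℤ) (x : Torus n) : lamLift m (0, x) = 0 := by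
  funext i
  show ((0 : unitInterval) : ℝ) * (m i : ℝ) = 0
  norm_num

lemma lamLift_one (m : Fin n → ℤ) (x : Torus n) (i : Fin n) :
    lamLift m (1, x) i = (m i : ℝ) := by
  show ((1 : unitInterval) : ℝ) * (m i : ℝ) = (m i : ℝ)
  norm_num

lemma lamLift_proj (m : Fin n → ℤ) (q : unitInterval × Torus n) (i : Fin n) :
    ((lamLift m q i : ℝ) : A) = Kmap (lam m) q i := by
  rw [Kmap_apply, lam_apply]
  show (((q.1 : ℝ) * (m i : ℝ) : ℝ) : A)
    = ((q.2 + fun j => ((((q.1 : ℝ)) * (m j : ℝ) : ℝ) : A)) - q.2) i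
  show (((q.1 : ℝ) * (m i : ℝ) : ℝ) : A)
    = q.2 i + (((q.1 : ℝ) * (m i : ℝ) : ℝ) : A) - q.2 i
  abel

lemma homotopic_lam_lam {m m' : Fin n → ℤ} (h : Path.Homotopic (lam (n := n) m) (lam m')) :
    m = m' :=
  end_unique (lam m) (lam m') h (lamLift m) (lamLift m')
    (lamLift_zero m) (lamLift_zero m') (lamLift_proj m) (lamLift_proj m') m m'
    (fun x i => lamLift_one m x i) (fun x i => lamLift_one m' x i)

/-- explicit lift of a concatenation of two rotation loops -/
def transLift (a b : Fin n → ℤ) : C(unitInterval × Torus n, Fin n → ℝ) :=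
  ⟨fun q i => min (2 * (q.1 : ℝ)) 1 * (a i : ℝ) + max (2 * (q.1 : ℝ) - 1) 0 * (b i : ℝ),
   by
    refine continuous_pi fun i => Continuous.add (Continuous.mul ?_ continuous_const)
      (Continuous.mul ?_ continuous_const)
    · exact (continuous_const.mul (continuous_subtype_val.comp continuous_fst)).min
        continuous_const
    · exact ((continuous_const.mul
        (continuous_subtype_val.comp continuous_fst)).sub continuous_const).max
        continuous_const⟩

lemma transLift_zero (a b : Fin n → ℤ) (x : Torus n) : transLift a b (0, x) = 0 := by
  funext i
  show min (2 * ((0 : unitInterval) : ℝ)) 1 * (a i : ℝ)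
      + max (2 * ((0 : unitInterval) : ℝ) - 1) 0 * (b i : ℝ) = 0
  norm_num

lemma transLift_one (a b : Fin n → ℤ) (x : Torus n) (i : Fin n) :
    transLift a b (1, x) i = ((a + b) i : ℝ) := by
  show min (2 * ((1 : unitInterval) : ℝ)) 1 * (a i : ℝ)
      + max (2 * ((1 : unitInterval) : ℝ) - 1) 0 * (b i : ℝ) = ((a + b) i : ℝ)
  have : ((a + b) i : ℝ) = (a i : ℝ) + (b i : ℝ) := by rw [Pi.add_apply]; push_cast; ring
  rw [this]
  norm_num

lemma transLift_proj (a b : Fin n → ℤ) (q : unitInterval × Torus n) (i : Fin n) :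
    ((transLift a b q i : ℝ) : A) = Kmap ((lam a).trans (lam b)) q i := by
  obtain ⟨t, x⟩ := q
  rw [Kmap_apply]
  show ((min (2 * (t : ℝ)) 1 * (a i : ℝ) + max (2 * (t : ℝ) - 1) 0 * (b i : ℝ) : ℝ) : A)
    = ((((lam a).trans (lam b) t : HEquivSpace (Torus n)) : C(Torus n, Torus n)) x - x) i
  rw [Path.trans_apply]
  split_ifs with ht
  · -- t ≤ 1/2
    have h1 : min (2 * (t : ℝ)) 1 = 2 * (t : ℝ) := min_eq_left (by linarith)
    have h2 : max (2 * (t : ℝ) - 1) 0 = 0 := max_eq_right (by linarith)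
    rw [h1, h2, lam_apply]
    show ((2 * (t : ℝ) * (a i : ℝ) + 0 * (b i : ℝ) : ℝ) : A)
      = x i + (((2 * (t : ℝ) * (a i : ℝ) : ℝ)) : A) - x i
    rw [zero_mul, add_zero]
    abel
  · -- t > 1/2
    have h1 : min (2 * (t : ℝ)) 1 = 1 := min_eq_right (by push_neg at ht; linarith)
    have h2 : max (2 * (t : ℝ) - 1) 0 = 2 * (t : ℝ) - 1 := max_eq_left (by push_neg at ht; linarith)
    rw [h1, h2, lam_apply]
    show ((1 * (a i : ℝ) + (2 * (t : ℝ) - 1) * (b i : ℝ) : ℝ) : A)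
      = x i + ((((2 * (t : ℝ) - 1) * (b i : ℝ) : ℝ)) : A) - x i
    rw [one_mul, ← qmk_eq, map_add, qmk_eq, qmk_eq, coe_int_eq_zero, zero_add]
    abel

lemma homotopic_trans (a b : Fin n → ℤ) :
    Path.Homotopic ((lam (n := n) a).trans (lam b)) (lam (a + b)) := by
  refine homotopic_lam _ (transLift a b) (transLift_zero a b) ?_ (a + b)
    (fun x i => transLift_one a b x i)
  · intro q i
    exact transLift_proj a b q i

end TorusPi1
end

open TorusPi1
/-- The rotation loops `γᵢ(t) = (x ↦ x + t·eᵢ)` are well-defined continuous loops in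
the space `G(Tⁿ)` of self-homotopy equivalences of the standard torus, based at the
identity, and the homomorphism `ℤⁿ → π₁(G(Tⁿ), id)` sending `eᵢ` to `[γᵢ]` is an
isomorphism. -/
theorem pi1_self_homotopy_equivalences_torus (n : ℕ) :
    ∃ γ : Fin n → Path (HEquivSpace.idPt (Torus n)) (HEquivSpace.idPt (Torus n)),
      (∀ (i : Fin n) (t : unitInterval) (x : Torus n),
        ((γ i t : HEquivSpace (Torus n)) : C(Torus n, Torus n)) x =
          x + Pi.single i ((t : ℝ) : AddCircle (1 : ℝ))) ∧
      ∃ φ : (Fin n → ℤ) →+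
          Additive (FundamentalGroup (HEquivSpace (Torus n)) (HEquivSpace.idPt (Torus n))),
        (∀ i : Fin n, φ (Pi.single i 1) =
          Additive.ofMul (@FundamentalGroup.fromPath (TopCat.of (HEquivSpace (Torus n))) _
            (HEquivSpace.idPt (Torus n)) ⟦γ i⟧)) ∧
        Function.Bijective φ := by
  classical
  refine ⟨fun i => lam (Pi.single i 1), ?_, ?_⟩
  · -- the loops are the basic rotations
    intro i t x
    rw [lam_apply]
    congr 1
    funext j
    rcases eq_or_ne j i with rfl | hj
    · show (((t : ℝ) * ((Pi.single j (1:ℤ) : Fin n → ℤ) j : ℝ) : ℝ) : A)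
        = (Pi.single j (((t : ℝ) : AddCircle (1:ℝ))) : Torus n) j
      rw [Pi.single_eq_same, Pi.single_eq_same, Int.cast_one, mul_one]
    · show (((t : ℝ) * ((Pi.single i (1:ℤ) : Fin n → ℤ) j : ℝ) : ℝ) : A)
        = (Pi.single i (((t : ℝ) : AddCircle (1:ℝ))) : Torus n) j
      rw [Pi.single_eq_of_ne hj, Pi.single_eq_of_ne hj, Int.cast_zero, mul_zero]
      rfl
  · -- the isomorphism
    set X : TopCat := TopCat.of (HEquivSpace (Torus n)) with hX
    set pt : HEquivSpace (Torus n) := HEquivSpace.idPt (Torus n) with hpt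
    have key : ∀ a b : Fin n → ℤ,
        (FundamentalGroup.fromPath (X := X) (x := pt) ⟦lam (a + b)⟧ :
          FundamentalGroup X pt)
          = FundamentalGroup.fromPath (X := X) (x := pt) ⟦lam a⟧
            * FundamentalGroup.fromPath (X := X) (x := pt) ⟦lam b⟧ := by
      intro a b
      show (⟦lam (a + b)⟧ : Path.Homotopic.Quotient pt pt)
        = Path.Homotopic.Quotient.trans ⟦lam b⟧ ⟦lam a⟧
      show (⟦lam (a + b)⟧ : Path.Homotopic.Quotient pt pt) = ⟦(lam b).trans (lam a)⟧
      have : Path.Homotopic ((lam (n := n) b).trans (lam a)) (lam (a + b)) := by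
        rw [add_comm]
        exact homotopic_trans b a
      exact (Quotient.sound this).symm
    refine ⟨AddMonoidHom.mk' (fun m =>
      Additive.ofMul (FundamentalGroup.fromPath (X := X) (x := pt) ⟦lam m⟧)) ?_, ?_, ?_, ?_⟩
    · intro a b
      show Additive.ofMul (FundamentalGroup.fromPath (X := X) (x := pt) ⟦lam (a + b)⟧)
        = Additive.ofMul (FundamentalGroup.fromPath (X := X) (x := pt) ⟦lam a⟧)
          + Additive.ofMul (FundamentalGroup.fromPath (X := X) (x := pt) ⟦lam b⟧)
      rw [key a b]
      rfl
    · intro i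
      rfl
    · -- injective
      intro a b hab
      have h1 : (FundamentalGroup.fromPath (X := X) (x := pt) ⟦lam a⟧ :
          FundamentalGroup X pt) = FundamentalGroup.fromPath (X := X) (x := pt) ⟦lam b⟧ :=
        Additive.ofMul.injective hab
      have h2 : (⟦lam a⟧ : Path.Homotopic.Quotient pt pt) = ⟦lam b⟧ :=
        h1
      exact homotopic_lam_lam (Quotient.exact h2)
    · -- surjective
      intro g
      obtain ⟨γ0, hγ0⟩ := Quotient.exists_rep ((Additive.toMul g) :
        Path.Homotopic.Quotient pt pt)
      obtain ⟨L, h0, hproj⟩ := exists_loopLift γ0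
      obtain ⟨m, hend⟩ := exists_end γ0 L hproj
      refine ⟨m, ?_⟩
      have hhom : Path.Homotopic γ0 (lam m) := homotopic_lam γ0 L h0 hproj m hend
      show Additive.ofMul (FundamentalGroup.fromPath (X := X) (x := pt) ⟦lam m⟧) = g
      have h1 : (⟦lam m⟧ : Path.Homotopic.Quotient pt pt) = (Additive.toMul g) := by
        rw [← hγ0]
        exact (Quotient.sound hhom).symm
      have h2 : (FundamentalGroup.fromPath (X := X) (x := pt) ⟦lam m⟧ :
          FundamentalGroup X pt) = Additive.toMul g := by
        exact h1
      rw [h2]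
      rfl
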